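/- Let G be a torsion-free locally cyclic group (equivalently, a subgroup of (ℚ, +)). Then every Schur ring over G is either the group ring F[G] or the symmetric Schur ring F[G]^± whose classes are the pairs {g, g^{-1}}. -/

import Mathlib

/-- The Hadamard (coefficientwise) product on the group algebra. -/
noncomputable def hadamard {F G : Type*} [Semiring F]
    (α β : MonoidAlgebra F G) : MonoidAlgebra F G :=
  MonoidAlgebra.ofCoeff (Finsupp.zipWith (· * ·) (mul_zero 0) α.coeff β.coeff)

/-- The simple quantity `C̄ = ∑_{g ∈ C} g` of a finite subset of `G`. -/
noncomputable def simpleQuantity (F : Type*) {G : Type*} [Semiring F] (C : Finset G) :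
    MonoidAlgebra F G :=
  ∑ g ∈ C, MonoidAlgebra.single g 1

/-- A partition of `G` into finite (nonempty) classes, i.e. a partition of finite support. -/
structure FinPartition (G : Type*) where
  classes : Set (Finset G)
  nonempty : ∀ C ∈ classes, C.Nonempty
  existsUnique_mem : ∀ g : G, ∃! C, C ∈ classes ∧ g ∈ C

/-- The Schur module associated to a partition of finite support: the `F`-span of the
simple quantities of the classes. -/
noncomputable def schurModule (F : Type*) {G : Type*} [Field F] (P : FinPartition G) :
    Submodule F (MonoidAlgebra F G) :=
  Submodule.span F (simpleQuantity F '' P.classes)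

/-- A Schur ring over a group `G` with coefficients in `F`, given by its partition
of finite support: `{1}` is a class, classes are closed under inversion, and the product
of two simple quantities is a finite `F`-linear combination of simple quantities. -/
structure SchurRing (F G : Type*) [Field F] [Group G] extends FinPartition G where
  one_mem : ({1} : Finset G) ∈ classes
  inv_mem : ∀ C ∈ classes, ∃ D ∈ classes, ∀ g : G, g ∈ D ↔ g⁻¹ ∈ C
  mul_mem : ∀ C ∈ classes, ∀ D ∈ classes,
    simpleQuantity F C * simpleQuantity F D ∈
      Submodule.span F (simpleQuantity F '' classes)

/-- The underlying Schur ring, as a submodule of the group algebra. -/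
noncomputable def SchurRing.carrier {F G : Type*} [Field F] [Group G] (S : SchurRing F G) :
    Submodule F (MonoidAlgebra F G) :=
  schurModule F S.toFinPartition

/-- A subset of `G` is an `S`-set if it is a union of classes of the partition. -/
def IsSSet {F G : Type*} [Field F] [Group G] (S : SchurRing F G) (X : Set G) : Prop :=
  ∃ E ⊆ S.classes, X = ⋃ C ∈ E, (C : Set G)

/-- The group ring `F[H]` of a subgroup, viewed inside `F[G]`. -/
noncomputable def groupRingOf (F : Type*) {G : Type*} [Field F] [Group G] (H : Subgroup G) :
    Submodule F (MonoidAlgebra F G) :=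
  Submodule.span F ((fun g => (MonoidAlgebra.single g 1 : MonoidAlgebra F G)) '' (H : Set G))

/-- Old Mathlib definition: no nontrivial element has finite order. -/
def Monoid.IsTorsionFree (G : Type*) [Monoid G] : Prop :=
  ∀ g : G, g ≠ 1 → ¬IsOfFinOrder g

/-
A torsion-free locally cyclic group embeds into `(ℚ, +)` by some `f`, and all further arguments
only use `f`. As `F` has characteristic zero, the number of ways to write an element as a product
of elements of given classes is constant on classes. If `a` maximizes `f` on its class `C`, then
`a ^ N` is uniquely a product of `N` elements of `C`; so every element of the class of `a ^ N` is
some `d ^ N`, `d ∈ C`, again with a unique factorization. For large `N` this excludes the `d`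
strictly between the extremes of `C`, and the class of `a ^ N` becomes the pair `{a ^ N, c ^ N}`,
`c` the minimum of `C`. A two-element class `{a, b}` is `{a, a⁻¹}`: the class of `w = a * b⁻¹` is
`{w, w⁻¹}`, so are the classes of the powers of `w`, and some power of `a` is a power of `w` or
of `w⁻¹`. Hence all classes are singletons or symmetric pairs, and a nontrivial singleton class
would translate a symmetric pair to a non-symmetric one.
-/

open Finset Filter
open scoped Pointwise

lemma Rat.exists_nat_mul_eq_or_neg {x y : ℚ} (hx : x ≠ 0) (hy : y ≠ 0) :
    ∃ m n : ℕ, 0 < m ∧ 0 < n ∧ (m * x = n * y ∨ m * x = -(n * y)) := by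
  set r := x / y
  have hnum : r.num ≠ 0 := Rat.num_ne_zero.2 (div_ne_zero hx hy)
  have hx' : x = r * y := (div_mul_cancel₀ x hy).symm
  have key : (r.den : ℚ) * x = r.num * y := by
    rw [hx', ← mul_assoc, mul_comm (r.den : ℚ), Rat.mul_den_eq_num]
  refine ⟨r.den, r.num.natAbs, r.den_pos, Int.natAbs_pos.2 hnum, ?_⟩
  rw [key, Nat.cast_natAbs, Int.cast_abs]
  rcases abs_choice (r.num : ℚ) with h | h <;> rw [h]
  · exact .inl rfl
  · exact .inr (by ring)

section RatEmbedding

variable {G : Type*} [CommGroup G]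

structure IsRatEmbedding (f : G → ℚ) : Prop where
  map_mul : ∀ a b, f (a * b) = f a + f b
  injective : Function.Injective f

namespace IsRatEmbedding

variable {f : G → ℚ} (hf : IsRatEmbedding f)
include hf

lemma map_one : f 1 = 0 := by
  simpa using hf.map_mul 1 1

lemma map_inv (a : G) : f a⁻¹ = -f a := by
  have := hf.map_mul a a⁻¹
  rw [mul_inv_cancel, hf.map_one] at this
  linarith

lemma map_pow (a : G) (n : ℕ) : f (a ^ n) = n * f a := by
  induction n with
  | zero => simp [hf.map_one]
  | succ n ih => rw [pow_succ, hf.map_mul, ih]; push_cast; ring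

lemma map_prod {ι : Type*} (s : Finset ι) (t : ι → G) : f (∏ i ∈ s, t i) = ∑ i ∈ s, f (t i) := by
  induction s using Finset.cons_induction with
  | empty => simp [hf.map_one]
  | cons i s hi ih => rw [prod_cons, sum_cons, hf.map_mul, ih]

lemma neg : IsRatEmbedding fun x => -f x :=
  ⟨fun a b => by rw [hf.map_mul]; ring, neg_injective.comp hf.injective⟩

lemma exists_pow_eq_pow_or_inv {x y : G} (hx : f x ≠ 0) (hy : f y ≠ 0) :
    ∃ m n : ℕ, 0 < m ∧ 0 < n ∧ (x ^ m = y ^ n ∨ x ^ m = (y ^ n)⁻¹) := by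
  obtain ⟨m, n, hm, hn, h⟩ := Rat.exists_nat_mul_eq_or_neg hx hy
  refine ⟨m, n, hm, hn, h.imp (fun h => hf.injective ?_) (fun h => hf.injective ?_)⟩
  · rw [hf.map_pow, hf.map_pow, h]
  · rw [hf.map_pow, hf.map_inv, hf.map_pow, h]

end IsRatEmbedding

lemma exists_zpow_eq_zpow (hLC : ∀ H : Subgroup G, H.FG → IsCyclic H) {g₀ : G} (hg₀ : g₀ ≠ 1)
    (g : G) : ∃ m n : ℤ, m ≠ 0 ∧ g ^ m = g₀ ^ n := by
  have hFG : (Subgroup.closure ({g₀, g} : Set G)).FG := by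
    classical exact ⟨{g₀, g}, by simp⟩
  obtain ⟨⟨z, _⟩, hz⟩ := @IsCyclic.exists_generator _ _ (hLC _ hFG)
  obtain ⟨p, hp⟩ := Subgroup.mem_zpowers_iff.1 (hz ⟨g₀, Subgroup.subset_closure (by simp)⟩)
  obtain ⟨q, hq⟩ := Subgroup.mem_zpowers_iff.1 (hz ⟨g, Subgroup.subset_closure (by simp)⟩)
  simp only [Subtype.ext_iff, SubgroupClass.coe_zpow] at hp hq
  refine ⟨p, q, ?_, ?_⟩
  · rintro rfl
    exact hg₀ (by simpa using hp.symm)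
  · rw [← hp, ← hq, ← zpow_mul, ← zpow_mul, mul_comm]

theorem exists_isRatEmbedding (hTF : Monoid.IsTorsionFree G)
    (hLC : ∀ H : Subgroup G, H.FG → IsCyclic H) : ∃ f : G → ℚ, IsRatEmbedding f := by
  rcases subsingleton_or_nontrivial G with hG | _
  · exact ⟨0, fun _ _ => by simp, fun a b _ => Subsingleton.elim a b⟩
  obtain ⟨g₀, hg₀⟩ := exists_ne (1 : G)
  have hinj : Function.Injective (g₀ ^ · : ℤ → G) :=
    injective_zpow_iff_not_isOfFinOrder.2 (hTF g₀ hg₀)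
  choose m n hm hmn using exists_zpow_eq_zpow hLC hg₀
  -- the embedding is `g ↦ n / m` for any `m ≠ 0`, `n` with `g ^ m = g₀ ^ n`
  have hratio : ∀ g (m' n' : ℤ), m' ≠ 0 → g ^ m' = g₀ ^ n' → (n g : ℚ) / m g = n' / m' := by
    intro g m' n' hm' h
    have : n g * m' = n' * m g := hinj <| calc
      g₀ ^ (n g * m') = (g ^ m g) ^ m' := by rw [zpow_mul, hmn]
      _ = (g ^ m') ^ m g := by rw [← zpow_mul, ← zpow_mul, mul_comm]
      _ = g₀ ^ (n' * m g) := by rw [h, ← zpow_mul]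
    rw [div_eq_div_iff (by exact_mod_cast hm g) (by exact_mod_cast hm')]
    exact_mod_cast this
  refine ⟨fun g => n g / m g, fun a b => ?_, fun a b hab => ?_⟩
  · rw [hratio (a * b) (m a * m b) (n a * m b + n b * m a) (mul_ne_zero (hm a) (hm b)) ?_]
    · field_simp [hm a, hm b]
      push_cast; ring
    · rw [mul_zpow, zpow_add, zpow_mul, hmn, mul_comm (m a), zpow_mul, hmn, ← zpow_mul,
        ← zpow_mul]
  · have hM : m a * m b ≠ 0 := mul_ne_zero (hm a) (hm b)
    have hab' : (a * b⁻¹) ^ (m a * m b) = 1 := by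
      rw [mul_zpow, inv_zpow, mul_inv_eq_one, zpow_mul, hmn, mul_comm (m a), zpow_mul, hmn,
        ← zpow_mul, ← zpow_mul]
      congr 1
      rw [div_eq_div_iff (by exact_mod_cast hm a) (by exact_mod_cast hm b)] at hab
      exact_mod_cast hab
    by_contra hne
    exact hTF _ (mul_inv_eq_one.not.2 hne) (isOfFinOrder_iff_zpow_eq_one.2 ⟨_, hM, hab'⟩)

end RatEmbedding

lemma coeff_simpleQuantity {F G : Type*} [Semiring F] [DecidableEq G] (C : Finset G) (x : G) :
    (simpleQuantity F C).coeff x = if x ∈ C then 1 else 0 := by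
  simp [simpleQuantity, MonoidAlgebra.coeff_sum, Finsupp.single_apply]

def numFactorizations {G : Type*} [CommMonoid G] [DecidableEq G] {n : ℕ} (C : Fin n → Finset G)
    (x : G) : ℕ :=
  #{t ∈ Fintype.piFinset C | ∏ i, t i = x}

lemma coeff_prod_simpleQuantity {F G : Type*} [CommSemiring F] [CommMonoid G] [DecidableEq G]
    {n : ℕ} (C : Fin n → Finset G) (x : G) :
    (∏ i, simpleQuantity F (C i)).coeff x = numFactorizations C x := by
  simp only [simpleQuantity, prod_univ_sum, MonoidAlgebra.prod_single, prod_const_one,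
    MonoidAlgebra.coeff_sum, MonoidAlgebra.coeff_single, Finsupp.finsetSum_apply,
    Finsupp.single_apply, sum_boole, numFactorizations]

section Factorizations

variable {G : Type*} [CommGroup G] [DecidableEq G] {f : G → ℚ}

lemma numFactorizations_pow_eq_one (hf : IsRatEmbedding f) {C : Finset G} {a : G} (ha : a ∈ C)
    (hmax : ∀ x ∈ C, f x ≤ f a) (N : ℕ) :
    numFactorizations (fun _ : Fin N => C) (a ^ N) = 1 := by
  rw [numFactorizations, card_eq_one]
  refine ⟨fun _ => a, eq_singleton_iff_unique_mem.2 ⟨by simp [ha], fun t ht => ?_⟩⟩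
  rw [mem_filter, Fintype.mem_piFinset] at ht
  have hsum : ∑ i, f (t i) = ∑ _i : Fin N, f a := by
    rw [← hf.map_prod, ht.2, hf.map_pow]; simp
  funext i
  exact hf.injective ((sum_eq_sum_iff_of_le fun i _ => hmax _ (ht.1 i)).1 hsum i (mem_univ i))

lemma exists_eq_pow_of_numFactorizations_eq_one {C : Finset G} {N : ℕ} (hN : 0 < N) {y : G}
    (h : numFactorizations (fun _ : Fin N => C) y = 1) : ∃ d ∈ C, y = d ^ N := by
  obtain ⟨t, ht⟩ := card_eq_one.1 h
  have htmem := ht ▸ mem_singleton_self t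
  rw [mem_filter, Fintype.mem_piFinset] at htmem
  -- permuting a factorization gives a factorization, so by uniqueness all factors agree
  have hconst : ∀ i j, t i = t j := fun i j => by
    have hswap :
        t ∘ Equiv.swap i j ∈ {s ∈ Fintype.piFinset fun _ : Fin N => C | ∏ k, s k = y} :=
      mem_filter.2 ⟨Fintype.mem_piFinset.2 fun _ => htmem.1 _, (Equiv.prod_comp _ t).trans htmem.2⟩
    rw [ht, mem_singleton] at hswap
    simpa using congrFun hswap j
  refine ⟨t ⟨0, hN⟩, htmem.1 _, ?_⟩
  rw [← htmem.2, prod_congr rfl fun j _ => hconst j ⟨0, hN⟩]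
  simp

lemma eventually_two_le_numFactorizations_pow (hf : IsRatEmbedding f) {C : Finset G} {a c d : G}
    (ha : a ∈ C) (hc : c ∈ C) (hd : d ∈ C) (hcd : f c < f d) (hda : f d < f a) :
    ∀ᶠ N in atTop, 2 ≤ numFactorizations (fun _ : Fin N => C) (d ^ N) := by
  obtain ⟨α, β, hα, hβ, hαβ⟩ :=
    Rat.exists_nat_mul_eq_or_neg (sub_ne_zero.2 hcd.ne') (sub_ne_zero.2 hda.ne')
  have hrel : α * (f d - f c) = β * (f a - f d) := hαβ.resolve_right fun h => by
    have : (0 : ℚ) < α * (f d - f c) := mul_pos (by exact_mod_cast hα) (by linarith)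
    have : (0 : ℚ) < β * (f a - f d) := mul_pos (by exact_mod_cast hβ) (by linarith)
    linarith
  filter_upwards [eventually_ge_atTop (α + β)] with N hN
  obtain ⟨r, rfl⟩ := Nat.exists_eq_add_of_le hN
  -- a second factorization `d ^ (α + β + r) = c ^ α * a ^ β * d ^ r`
  set t : Fin (α + β + r) → G :=
    Fin.append (Fin.append (fun _ : Fin α => c) fun _ : Fin β => a) fun _ : Fin r => d
  have ht :
      t ∈ {s ∈ Fintype.piFinset fun _ : Fin (α + β + r) => C | ∏ i, s i = d ^ (α + β + r)} := by
    rw [mem_filter, Fintype.mem_piFinset]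
    refine ⟨fun i => ?_, hf.injective ?_⟩
    · refine Fin.addCases (fun i => Fin.addCases (fun i => ?_) (fun i => ?_) i) (fun i => ?_) i <;>
        simpa [t]
    · simp only [t, Fin.prod_univ_add, Fin.append_left, Fin.append_right, prod_const, card_univ,
        Fintype.card_fin, hf.map_mul, hf.map_pow]
      push_cast
      linear_combination -hrel
  have hne : t ≠ fun _ => d := fun h => by
    have := congrFun h (Fin.castAdd r (Fin.castAdd β ⟨0, hα⟩))
    simp only [t, Fin.append_left] at this
    exact hcd.ne (congrArg f this)
  exact one_lt_card.2 ⟨t, ht, _, by simp [hd], hne⟩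

end Factorizations

namespace FinPartition

variable {G : Type*} (P : FinPartition G)

noncomputable def cls (g : G) : Finset G :=
  (P.existsUnique_mem g).exists.choose

lemma cls_mem (g : G) : P.cls g ∈ P.classes :=
  (P.existsUnique_mem g).exists.choose_spec.1

lemma mem_cls (g : G) : g ∈ P.cls g :=
  (P.existsUnique_mem g).exists.choose_spec.2

lemma eq_cls_of_mem {C : Finset G} {g : G} (hC : C ∈ P.classes) (hg : g ∈ C) : C = P.cls g :=
  (P.existsUnique_mem g).unique ⟨hC, hg⟩ ⟨P.cls_mem g, P.mem_cls g⟩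

lemma cls_eq_cls_of_mem {x y : G} (h : y ∈ P.cls x) : P.cls y = P.cls x :=
  (P.eq_cls_of_mem (P.cls_mem x) h).symm

lemma mem_cls_iff_of_mem_cls {C : Finset G} {x y : G} (hC : C ∈ P.classes) (h : y ∈ P.cls x) :
    y ∈ C ↔ x ∈ C := by
  constructor <;> intro hmem
  · rw [P.eq_cls_of_mem hC hmem, P.cls_eq_cls_of_mem h]; exact P.mem_cls x
  · rw [P.eq_cls_of_mem hC hmem, ← P.cls_eq_cls_of_mem h]; exact P.mem_cls y

end FinPartition


namespace SchurRing

section Group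

variable {F G : Type*} [Field F] [Group G] (S : SchurRing F G)

lemma cls_one : S.cls 1 = {1} :=
  (S.eq_cls_of_mem S.one_mem (mem_singleton_self 1)).symm

lemma one_notMem_cls {g : G} (hg : g ≠ 1) : 1 ∉ S.cls g := fun h => by
  have hg' := S.mem_cls g
  rw [← S.cls_eq_cls_of_mem h, S.cls_one, mem_singleton] at hg'
  exact hg hg'

lemma classes_eq_range {X : G → Finset G} (h : ∀ g, S.cls g = X g) :
    S.classes = Set.range X := by
  ext C
  refine ⟨fun hC => ?_, ?_⟩
  · obtain ⟨x, hx⟩ := S.nonempty C hC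
    exact ⟨x, (h x).symm.trans (S.eq_cls_of_mem hC hx).symm⟩
  · rintro ⟨x, rfl⟩
    exact h x ▸ S.cls_mem x

lemma one_mem_carrier : (1 : MonoidAlgebra F G) ∈ S.carrier :=
  Submodule.subset_span ⟨{1}, S.one_mem, by simp [simpleQuantity, MonoidAlgebra.one_def]⟩

lemma mul_mem_carrier {u v : MonoidAlgebra F G} (hu : u ∈ S.carrier) (hv : v ∈ S.carrier) :
    u * v ∈ S.carrier := by
  have : S.carrier * S.carrier ≤ S.carrier := by
    rw [carrier, schurModule, Submodule.span_mul_span, Submodule.span_le]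
    rintro _ ⟨_, ⟨C, hC, rfl⟩, _, ⟨D, hD, rfl⟩, rfl⟩
    exact S.mul_mem C hC D hD
  exact this (Submodule.mul_mem_mul hu hv)

noncomputable def toSubalgebra : Subalgebra F (MonoidAlgebra F G) :=
  S.carrier.toSubalgebra S.one_mem_carrier fun _ _ => S.mul_mem_carrier

variable [DecidableEq G]

lemma cls_inv (g : G) : S.cls g⁻¹ = (S.cls g).image (·⁻¹) := by
  obtain ⟨D, hD, hDC⟩ := S.inv_mem _ (S.cls_mem g)
  have hD' : D = (S.cls g).image (·⁻¹) := by
    ext x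
    simp [hDC, inv_eq_iff_eq_inv]
  rw [← hD', ← S.eq_cls_of_mem hD ((hDC g⁻¹).2 (by simpa using S.mem_cls g))]

lemma inv_mem_cls_inv {x y : G} (h : y ∈ S.cls x) : y⁻¹ ∈ S.cls x⁻¹ := by
  rw [cls_inv]
  exact mem_image_of_mem _ h

lemma cls_eq_pair_of_subset {x y : G} (hsub : S.cls x ⊆ {x, y})
    (hx : ({x} : Finset G) ∉ S.classes) : S.cls x = {x, y} := by
  refine hsub.antisymm (insert_subset (S.mem_cls x) (singleton_subset_iff.2 ?_))
  by_contra hy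
  have hsing : S.cls x = {x} := eq_singleton_iff_unique_mem.2 ⟨S.mem_cls x, fun z hz =>
    (mem_insert.1 (hsub hz)).resolve_right fun h => hy (mem_singleton.1 h ▸ hz)⟩
  exact hx (hsing ▸ S.cls_mem x)

lemma coeff_eq_of_mem_cls {v : MonoidAlgebra F G} (hv : v ∈ S.carrier) {x y : G}
    (h : y ∈ S.cls x) : v.coeff y = v.coeff x := by
  induction hv using Submodule.span_induction with
  | mem w hw =>
    obtain ⟨D, hD, rfl⟩ := hw
    simp only [coeff_simpleQuantity, S.mem_cls_iff_of_mem_cls hD h]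
  | zero => rfl
  | add u w _ _ hu hw => simp only [MonoidAlgebra.coeff_add, Finsupp.add_apply, hu, hw]
  | smul a u _ hu => simp only [MonoidAlgebra.coeff_smul, Finsupp.smul_apply, hu]

end Group

section CommGroup

variable {F G : Type*} [Field F] [CommGroup G] (S : SchurRing F G)

lemma prod_simpleQuantity_mem {n : ℕ} {C : Fin n → Finset G} (hC : ∀ i, C i ∈ S.classes) :
    ∏ i, simpleQuantity F (C i) ∈ S.toSubalgebra :=
  Subalgebra.prod_mem _ fun i _ => Submodule.subset_span ⟨C i, hC i, rfl⟩

variable [DecidableEq G] [CharZero F]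

lemma numFactorizations_eq_of_mem_cls {n : ℕ} {C : Fin n → Finset G}
    (hC : ∀ i, C i ∈ S.classes) {x y : G} (h : y ∈ S.cls x) :
    numFactorizations C y = numFactorizations C x := by
  have := S.coeff_eq_of_mem_cls (S.prod_simpleQuantity_mem hC) h
  rwa [coeff_prod_simpleQuantity, coeff_prod_simpleQuantity, Nat.cast_inj] at this

lemma cls_subset_mul {C D : Finset G} (hC : C ∈ S.classes) (hD : D ∈ S.classes) {x : G}
    (hx : x ∈ C * D) : S.cls x ⊆ C * D := by
  have hpos : ∀ y, y ∈ C * D ↔ 0 < numFactorizations ![C, D] y := fun y => by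
    rw [numFactorizations, card_pos, Finset.mem_mul]
    constructor
    · rintro ⟨c, hc, d, hd, rfl⟩
      exact ⟨![c, d], by simp [Fintype.mem_piFinset, Fin.forall_fin_two, hc, hd]⟩
    · rintro ⟨t, ht⟩
      rw [mem_filter, Fintype.mem_piFinset, Fin.prod_univ_two] at ht
      exact ⟨t 0, ht.1 0, t 1, ht.1 1, ht.2⟩
  intro y hy
  rw [hpos] at hx ⊢
  rwa [S.numFactorizations_eq_of_mem_cls (fun i => by fin_cases i <;> assumption) hy]

lemma mul_mem_cls_mul {σ x y : G} (hσ : {σ} ∈ S.classes) (h : y ∈ S.cls x) :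
    y * σ ∈ S.cls (x * σ) := by
  have hσ' : ({σ⁻¹} : Finset G) ∈ S.classes := by
    rw [← image_singleton, S.eq_cls_of_mem hσ (mem_singleton_self σ), ← S.cls_inv]
    exact S.cls_mem _
  have hx : x ∈ S.cls (x * σ) * {σ⁻¹} :=
    mem_mul.2 ⟨x * σ, S.mem_cls _, σ⁻¹, mem_singleton_self _, mul_inv_cancel_right x σ⟩
  obtain ⟨z, hz, _, hσ, rfl⟩ := mem_mul.1 (S.cls_subset_mul (S.cls_mem _) hσ' hx h)
  rwa [mem_singleton.1 hσ, inv_mul_cancel_right]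

variable {f : G → ℚ} (hf : IsRatEmbedding f)
include hf

lemma numFactorizations_eq_one_of_mem_cls_pow {a : G} (hmax : ∀ x ∈ S.cls a, f x ≤ f a)
    {N : ℕ} {y : G} (hy : y ∈ S.cls (a ^ N)) :
    numFactorizations (fun _ : Fin N => S.cls a) y = 1 := by
  rw [S.numFactorizations_eq_of_mem_cls (fun _ => S.cls_mem a) hy]
  exact numFactorizations_pow_eq_one hf (S.mem_cls a) hmax N

lemma exists_eq_pow_of_mem_cls_pow {a : G} (hmax : ∀ x ∈ S.cls a, f x ≤ f a) {N : ℕ}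
    (hN : 0 < N) {y : G} (hy : y ∈ S.cls (a ^ N)) : ∃ d ∈ S.cls a, y = d ^ N :=
  exists_eq_pow_of_numFactorizations_eq_one hN
    (S.numFactorizations_eq_one_of_mem_cls_pow hf hmax hy)

lemma cls_pow_eq_pair_of_subset {a c : G} (hc : c ∈ S.cls a) (hca : f c ≠ f a) {N : ℕ} (hN : 0 < N)
    (hsub : S.cls (a ^ N) ⊆ {a ^ N, c ^ N})
    (hsub' : S.cls (a ^ (N + 1)) ⊆ {a ^ (N + 1), c ^ (N + 1)}) :
    S.cls (a ^ N) = {a ^ N, c ^ N} := by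
  refine S.cls_eq_pair_of_subset hsub fun hsing => ?_
  -- translating `cls a ∋ c` by the class `{a ^ N}` puts `c * a ^ N` into `cls (a ^ (N + 1))`
  have hmem := hsub' (pow_succ' a N ▸ S.mul_mem_cls_mul hsing hc)
  rw [mem_insert, mem_singleton] at hmem
  rcases hmem with h | h <;> have h' := congrArg f h <;>
    simp only [hf.map_mul, hf.map_pow] at h' <;> push_cast at h'
  · exact hca (by linarith)
  · exact hca (mul_left_cancel₀ (Nat.cast_ne_zero.2 hN.ne')
      (by linarith : (N : ℚ) * f c = N * f a))

lemma cls_pow_eq_pair_of_cls_eq_pair {a b : G} (hab : S.cls a = {a, b}) (hne : a ≠ b) {N : ℕ}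
    (hN : 0 < N) : S.cls (a ^ N) = {a ^ N, b ^ N} := by
  wlog hba : f b < f a generalizing f
  · exact this hf.neg (neg_lt_neg ((not_lt.1 hba).lt_of_ne (hf.injective.ne hne)))
  have hmax : ∀ x ∈ S.cls a, f x ≤ f a := by
    simp only [hab, mem_insert, mem_singleton, forall_eq_or_imp, forall_eq]
    exact ⟨le_rfl, hba.le⟩
  have hsub : ∀ M, 0 < M → S.cls (a ^ M) ⊆ {a ^ M, b ^ M} := fun M hM y hy => by
    obtain ⟨d, hd, rfl⟩ := S.exists_eq_pow_of_mem_cls_pow hf hmax hM hy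
    rw [hab, mem_insert, mem_singleton] at hd
    rcases hd with rfl | rfl <;> simp
  exact S.cls_pow_eq_pair_of_subset hf (by simp [hab]) hba.ne hN (hsub N hN)
    (hsub (N + 1) N.succ_pos)

lemma cls_mul_inv_eq_pair {a b : G} (hab : S.cls a = {a, b}) (hne : a ≠ b) :
    S.cls (a * b⁻¹) = {a * b⁻¹, (a * b⁻¹)⁻¹} := by
  have hb : b ∈ S.cls a := by simp [hab]
  have hw : a * b⁻¹ ≠ 1 := mul_inv_eq_one.not.2 hne
  have hsub : S.cls (a * b⁻¹) ⊆ {a * b⁻¹, (a * b⁻¹)⁻¹} := by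
    intro y hy
    have hy' := S.cls_subset_mul (S.cls_mem a) (S.cls_mem a⁻¹)
      (mul_mem_mul (S.mem_cls a) (S.inv_mem_cls_inv hb)) hy
    rw [S.cls_inv, hab] at hy'
    obtain ⟨u, hu, v, hv, rfl⟩ := mem_mul.1 hy'
    simp only [mem_insert, mem_singleton, image_insert, image_singleton] at hu hv
    rcases hu with rfl | rfl <;> rcases hv with rfl | rfl
    · exact absurd hy (by rw [mul_inv_cancel]; exact S.one_notMem_cls hw)
    · simp
    · simp
    · exact absurd hy (by rw [mul_inv_cancel]; exact S.one_notMem_cls hw)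
  refine S.cls_eq_pair_of_subset hsub fun hsing => ?_
  -- translation by `a * b⁻¹` sends `b` to `a`, hence fixes the class `{a, b}`
  have ha : a ∈ S.cls (a * (a * b⁻¹)) := by simpa using S.mul_mem_cls_mul hsing hb
  have ha' := S.cls_eq_cls_of_mem ha ▸ S.mem_cls (a * (a * b⁻¹))
  rw [hab, mem_insert, mem_singleton] at ha'
  rcases ha' with h | h <;> have h' := congrArg f h <;>
    simp only [hf.map_mul, hf.map_inv] at h'
  · exact hw (hf.injective (by rw [hf.map_mul, hf.map_inv, hf.map_one]; linarith))
  · exact hne (hf.injective (by linarith))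

lemma eq_inv_of_cls_eq_pair {a b : G} (hab : S.cls a = {a, b}) (hne : a ≠ b) : b = a⁻¹ := by
  set w := a * b⁻¹ with hw_def
  have hfw : f w ≠ 0 := fun h => hne (hf.injective (by
    rw [hw_def, hf.map_mul, hf.map_inv] at h
    linarith))
  have hfa : f a ≠ 0 := fun h0 => by
    have ha1 : a = 1 := hf.injective (h0.trans hf.map_one.symm)
    have hb : b ∈ S.cls a := by simp [hab]
    rw [ha1, S.cls_one, mem_singleton] at hb
    exact hne (ha1.trans hb.symm)
  have hwp : ∀ p, 0 < p → S.cls (w ^ p) = {w ^ p, (w ^ p)⁻¹} := fun p hp => by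
    rw [S.cls_pow_eq_pair_of_cls_eq_pair hf (S.cls_mul_inv_eq_pair hf hab hne) _ hp, inv_pow]
    exact fun h => hfw (by linarith [congrArg f h, hf.map_inv w])
  obtain ⟨q, p, hq, hp, hqp⟩ := hf.exists_pow_eq_pow_or_inv hfa hfw
  -- `a ^ q` lies in the class of `w ^ p`, which is closed under inversion
  have hsymm : (a ^ q)⁻¹ ∈ S.cls (a ^ q) := by
    have hmem : a ^ q ∈ S.cls (w ^ p) ∧ (a ^ q)⁻¹ ∈ S.cls (w ^ p) := by
      rw [hwp p hp]; rcases hqp with h | h <;> simp [h]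
    rw [S.cls_eq_cls_of_mem hmem.1]
    exact hmem.2
  rw [S.cls_pow_eq_pair_of_cls_eq_pair hf hab hne hq, mem_insert, mem_singleton] at hsymm
  have hq' : (q : ℚ) ≠ 0 := Nat.cast_ne_zero.2 hq.ne'
  rcases hsymm with h | h <;> have h' := congrArg f h <;>
    simp only [hf.map_inv, hf.map_pow] at h'
  · exact (hfa (by simpa [hq'] using (by linarith : (q : ℚ) * f a = 0))).elim
  · exact hf.injective (by rw [hf.map_inv]; exact mul_left_cancel₀ hq' (by linarith))

lemma eventually_cls_pow_subset_pair {a c : G} (hmax : ∀ x ∈ S.cls a, f x ≤ f a)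
    (hmin : ∀ x ∈ S.cls a, f c ≤ f x) (hc : c ∈ S.cls a) :
    ∀ᶠ N in atTop, S.cls (a ^ N) ⊆ {a ^ N, c ^ N} := by
  have hmid : ∀ᶠ N in atTop, ∀ d ∈ S.cls a, f c < f d → f d < f a →
      2 ≤ numFactorizations (fun _ : Fin N => S.cls a) (d ^ N) :=
    (eventually_all_finset _).2 fun d hd => by
      simp only [eventually_imp_distrib_left]
      exact fun hcd hda => eventually_two_le_numFactorizations_pow hf (S.mem_cls a) hc hd hcd hda
  filter_upwards [hmid, eventually_gt_atTop 0] with N hmid hN y hy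
  have hy1 := S.numFactorizations_eq_one_of_mem_cls_pow hf hmax hy
  obtain ⟨d, hd, rfl⟩ := exists_eq_pow_of_numFactorizations_eq_one hN hy1
  by_contra hy'
  have hda : d ≠ a := by rintro rfl; simp at hy'
  have hdc : d ≠ c := by rintro rfl; simp at hy'
  have := hmid d hd ((hmin d hd).lt_of_ne (hf.injective.ne hdc.symm))
    ((hmax d hd).lt_of_ne (hf.injective.ne hda))
  omega

lemma eventually_cls_pow_eq_pair {a c : G} (hmax : ∀ x ∈ S.cls a, f x ≤ f a)
    (hmin : ∀ x ∈ S.cls a, f c ≤ f x) (hc : c ∈ S.cls a) (hca : f c ≠ f a) :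
    ∀ᶠ N in atTop, S.cls (a ^ N) = {a ^ N, c ^ N} := by
  have h := S.eventually_cls_pow_subset_pair hf hmax hmin hc
  filter_upwards [h, (tendsto_add_atTop_nat 1).eventually h, eventually_gt_atTop 0] with N h h' hN
  exact S.cls_pow_eq_pair_of_subset hf hc hca hN h h'

lemma not_lt_of_mem_cls {a c e : G} (hmax : ∀ x ∈ S.cls a, f x ≤ f a)
    (hmin : ∀ x ∈ S.cls a, f c ≤ f x) (hc : c ∈ S.cls a) (he : e ∈ S.cls a) (hce : f c < f e) :
    ¬f e < f a := fun hea => by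
  obtain ⟨N, hN⟩ := eventually_atTop.1 ((S.eventually_cls_pow_eq_pair hf hmax hmin hc
    (by linarith)).and (eventually_gt_atTop 0))
  have hN0 : (0 : ℚ) < N := Nat.cast_pos.2 (hN N le_rfl).2
  have hfc : f c = -f a := by
    have hne : a ^ N ≠ c ^ N := fun h => by
      have := congrArg f h
      simp only [hf.map_pow] at this
      nlinarith
    have := congrArg f (S.eq_inv_of_cls_eq_pair hf (hN N le_rfl).1 hne)
    simp only [hf.map_pow, hf.map_inv] at this
    nlinarith
  -- `a = a ^ (N + 1) * c ^ N`, so `cls a` lies in the product of two pair classes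
  have ha : a ∈ S.cls (a ^ (N + 1)) * S.cls (a ^ N) := by
    refine mem_mul.2 ⟨a ^ (N + 1), S.mem_cls _, c ^ N, by simp [(hN N le_rfl).1],
      hf.injective ?_⟩
    simp only [hf.map_mul, hf.map_pow, hfc]
    push_cast; ring
  obtain ⟨u, hu, v, hv, rfl⟩ := mem_mul.1 (S.cls_subset_mul (S.cls_mem _) (S.cls_mem _) ha he)
  rw [(hN (N + 1) (by omega)).1, mem_insert, mem_singleton] at hu
  rw [(hN N le_rfl).1, mem_insert, mem_singleton] at hv
  rcases hu with rfl | rfl <;> rcases hv with rfl | rfl <;>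
    simp only [hf.map_mul, hf.map_pow, hfc] at hce hea <;> push_cast at hce hea <;> nlinarith

lemma card_cls_le_two (g : G) : #(S.cls g) ≤ 2 := by
  by_contra! h
  obtain ⟨a, ha, hmax⟩ := exists_max_image (S.cls g) f ⟨g, S.mem_cls g⟩
  obtain ⟨c, hc, hmin⟩ := exists_min_image (S.cls g) f ⟨g, S.mem_cls g⟩
  obtain ⟨e, he, hace⟩ : ∃ e ∈ S.cls g, e ∉ ({a, c} : Finset G) :=
    not_subset.1 fun hsub => by linarith [card_le_card hsub, card_le_two (a := a) (b := c)]
  rw [← S.cls_eq_cls_of_mem ha] at hmax hmin hc he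
  rw [mem_insert, mem_singleton, not_or] at hace
  exact S.not_lt_of_mem_cls hf hmax hmin hc he
    ((hmin e he).lt_of_ne (hf.injective.ne (Ne.symm hace.2)))
    ((hmax e he).lt_of_ne (hf.injective.ne hace.1))

lemma cls_eq_singleton_or_pair (g : G) : S.cls g = {g} ∨ S.cls g = {g, g⁻¹} := by
  by_cases hs : S.cls g = {g}
  · exact .inl hs
  obtain ⟨b, hb, hbg⟩ : ∃ b ∈ S.cls g, b ≠ g := by
    by_contra! h
    exact hs (eq_singleton_iff_unique_mem.2 ⟨S.mem_cls g, h⟩)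
  have hpair : S.cls g = {g, b} := (eq_of_subset_of_card_le
    (insert_subset (S.mem_cls g) (singleton_subset_iff.2 hb))
    (by rw [card_pair hbg.symm]; exact S.card_cls_le_two hf g)).symm
  rw [hpair, S.eq_inv_of_cls_eq_pair hf hpair hbg.symm]
  exact .inr rfl

lemma cls_eq_pair_of_cls_ne_singleton {s : G} (hs : S.cls s ≠ {s}) (g : G) :
    S.cls g = {g, g⁻¹} := by
  have hs' := (S.cls_eq_singleton_or_pair hf s).resolve_left hs
  have hfs : f s ≠ 0 := fun h => hs (by
    rw [hs', hf.injective (h.trans hf.map_one.symm)]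
    simp)
  rcases S.cls_eq_singleton_or_pair hf g with hg | hg
  · -- translation by the singleton class `{g}` sends the pair `{s, s⁻¹}` to a pair
    have hmem := S.mul_mem_cls_mul (hg ▸ S.cls_mem g) (show s⁻¹ ∈ S.cls s by simp [hs'])
    obtain h | h : s⁻¹ * g = s * g ∨ s⁻¹ * g = (s * g)⁻¹ := by
      rcases S.cls_eq_singleton_or_pair hf (s * g) with h | h <;>
        simp only [h, mem_insert, mem_singleton] at hmem
      exacts [.inl hmem, hmem]
    all_goals have h' := congrArg f h; simp only [hf.map_mul, hf.map_inv] at h'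
    · exact (hfs (by linarith)).elim
    obtain rfl : g = 1 := hf.injective (by rw [hf.map_one]; linarith)
    simpa using S.cls_one
  · exact hg

end CommGroup

end SchurRing

theorem stmt15 {F G : Type*} [Field F] [CharZero F] [CommGroup G] [DecidableEq G]
    (hTF : Monoid.IsTorsionFree G)
    (hLC : ∀ H : Subgroup G, H.FG → IsCyclic H)
    (S : SchurRing F G) :
    S.classes = Set.range (fun g : G => ({g} : Finset G)) ∨
    S.classes = Set.range (fun g : G => ({g, g⁻¹} : Finset G)) := by
  obtain ⟨f, hf⟩ := exists_isRatEmbedding hTF hLC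
  by_cases h : ∀ g, S.cls g = {g}
  · exact .inl (S.classes_eq_range h)
  · obtain ⟨s, hs⟩ := not_forall.1 h
    exact .inr (S.classes_eq_range (S.cls_eq_pair_of_cls_ne_singleton hf hs))
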